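/- Let N_A, N_B ≥ 2 and let ψ : Matrix (Fin N_A) (Fin N_B) ℂ, with associated pure-state density matrix ρ_ψ((m,μ),(n,ν)) = ψ(m,μ) · conj(ψ(n,ν)). Then the rank of the realigned matrix is the square of the rank of ψ: rank(RM(ρ_ψ)) = (rank ψ)². -/

import Mathlib

open Matrix Kronecker Complex ComplexOrder

noncomputable def traceNorm {m n : Type*} [Fintype m] [Fintype n] [DecidableEq n]
    (M : Matrix m n ℂ) : ℝ :=
  (((Matrix.posSemidef_conjTranspose_mul_self M).1.eigenvectorUnitary : Matrix n n ℂ) *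
    diagonal (((↑) : ℝ → ℂ) ∘ (fun x : ℝ => √x) ∘ (Matrix.posSemidef_conjTranspose_mul_self M).1.eigenvalues) *
    (star ((Matrix.posSemidef_conjTranspose_mul_self M).1.eigenvectorUnitary : Matrix n n ℂ))).trace.re

def realign {NA NB : ℕ} (ρ : Matrix (Fin NA × Fin NB) (Fin NA × Fin NB) ℂ) :
    Matrix (Fin NA × Fin NA) (Fin NB × Fin NB) ℂ :=
  fun p q => ρ (p.1, q.1) (p.2, q.2)

def IsDensityMatrix {n : Type*} [Fintype n] (ρ : Matrix n n ℂ) : Prop :=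
  ρ.PosSemidef ∧ ρ.trace = 1

noncomputable def hsNorm {m n : Type*} [Fintype m] [Fintype n] (M : Matrix m n ℂ) : ℝ :=
  Real.sqrt (∑ i, ∑ j, ‖M i j‖ ^ 2)

noncomputable def hsInner {m n : Type*} [Fintype m] [Fintype n] (X Y : Matrix m n ℂ) : ℂ :=
  (Xᴴ * Y).trace

noncomputable def marginalA {NA NB : ℕ} (ρ : Matrix (Fin NA × Fin NB) (Fin NA × Fin NB) ℂ) :
    Matrix (Fin NA) (Fin NA) ℂ :=
  fun m n => ∑ μ, ρ (m, μ) (n, μ)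

noncomputable def marginalB {NA NB : ℕ} (ρ : Matrix (Fin NA × Fin NB) (Fin NA × Fin NB) ℂ) :
    Matrix (Fin NB) (Fin NB) ℂ :=
  fun μ ν => ∑ m, ρ (m, μ) (m, ν)

def SeparableState {NA NB : ℕ} (ρ : Matrix (Fin NA × Fin NB) (Fin NA × Fin NB) ℂ) : Prop :=
  ∃ (ι : Type) (s : Finset ι) (p : ι → ℝ)
    (ρA : ι → Matrix (Fin NA) (Fin NA) ℂ) (ρB : ι → Matrix (Fin NB) (Fin NB) ℂ),
    (∀ i ∈ s, 0 < p i) ∧ (∑ i ∈ s, p i = 1) ∧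
    (∀ i ∈ s, IsDensityMatrix (ρA i)) ∧ (∀ i ∈ s, IsDensityMatrix (ρB i)) ∧
    ρ = ∑ i ∈ s, (p i : ℂ) • (ρA i ⊗ₖ ρB i)

noncomputable def l2OpNorm {n : Type*} [Fintype n] [DecidableEq n] (M : Matrix n n ℂ) : ℝ :=
  ‖Matrix.toEuclideanCLM (𝕜 := ℂ) (n := n) M‖

/-!
Realigning `ρψ((m,μ),(n,ν)) = ψ(m,μ) conj ψ(n,ν)` gives the Kronecker product `ψ ⊗ₖ conj ψ`, and
the rank of a Kronecker product is the product of the ranks, since over a field the range of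
`f ⊗ g` is `range f ⊗ range g`.
-/

theorem TensorProduct.finrank_range_map {K M N P Q : Type*} [Field K]
    [AddCommGroup M] [AddCommGroup N] [AddCommGroup P] [AddCommGroup Q]
    [Module K M] [Module K N] [Module K P] [Module K Q]
    (f : M →ₗ[K] P) (g : N →ₗ[K] Q) :
    Module.finrank K (LinearMap.range (map f g)) =
      Module.finrank K (LinearMap.range f) * Module.finrank K (LinearMap.range g) := by
  rw [range_map, ← range_mapIncl,
    LinearMap.finrank_range_of_inj (Module.Flat.tensorProduct_mapIncl_injective_of_right _ _),
    Module.finrank_tensorProduct]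

theorem Matrix.rank_kronecker {K l m n p : Type*} [Field K] [Fintype l] [Fintype m]
    [Fintype n] [Fintype p] (A : Matrix l m K) (B : Matrix n p K) :
    (A ⊗ₖ B).rank = A.rank * B.rank := by
  classical
  let bl := Pi.basisFun K l
  let bm := Pi.basisFun K m
  let bn := Pi.basisFun K n
  let bp := Pi.basisFun K p
  rw [rank_eq_finrank_range_toLin (A ⊗ₖ B) (bl.tensorProduct bn) (bm.tensorProduct bp),
    toLin_kronecker, rank_eq_finrank_range_toLin A bl bm, rank_eq_finrank_range_toLin B bn bp]
  exact TensorProduct.finrank_range_map _ _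

theorem realign_eq_kronecker {NA NB : ℕ} {ψ : Matrix (Fin NA) (Fin NB) ℂ}
    {ρψ : Matrix (Fin NA × Fin NB) (Fin NA × Fin NB) ℂ}
    (hρψ : ∀ m μ n ν, ρψ (m, μ) (n, ν) = ψ m μ * (starRingEnd ℂ) (ψ n ν)) :
    realign ρψ = ψ ⊗ₖ ψᴴᵀ := by
  ext ⟨m, n⟩ ⟨μ, ν⟩
  simp [realign, hρψ, kroneckerMap_apply, conjTranspose_apply]

theorem rank_realign_pure_state_general
    (NA NB : ℕ)
    (ψ : Matrix (Fin NA) (Fin NB) ℂ)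
    (ρψ : Matrix (Fin NA × Fin NB) (Fin NA × Fin NB) ℂ)
    (hρψ : ∀ m μ n ν, ρψ (m, μ) (n, ν) = ψ m μ * (starRingEnd ℂ) (ψ n ν)) :
    (realign ρψ).rank = ψ.rank ^ 2 := by
  rw [realign_eq_kronecker hρψ, rank_kronecker, rank_transpose, rank_conjTranspose, sq]

theorem rank_realign_pure_state
    (NA NB : ℕ) (hNA : 2 ≤ NA) (hNB : 2 ≤ NB)
    (ψ : Matrix (Fin NA) (Fin NB) ℂ)
    (ρψ : Matrix (Fin NA × Fin NB) (Fin NA × Fin NB) ℂ)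
    (hρψ : ∀ m μ n ν, ρψ (m, μ) (n, ν) = ψ m μ * (starRingEnd ℂ) (ψ n ν)) :
    (realign ρψ).rank = ψ.rank ^ 2 :=
  rank_realign_pure_state_general NA NB ψ ρψ hρψ
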